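/- For any a, b, v₁ ∈ ℝ, let u(s) = log(sinh(s + a)) + b for s > −a. Then 1 − u'(s)² < 0 for all such s, and the cylindrical surface X(s,t) = (t, s, u(s)) satisfies the translating soliton equation with respect to v = (v₁, 0, 1) at every point (s,t) with s > −a (a Lorentzian grim reaper with spacelike rulings; equivalently, u solves u'' = 1 − u'²). -/

import Mathlib

/-!
The cylinder `X(s,t) = (t, s, u(s))` has `X_t = (1,0,0)`, so `E = 1 - u'²`, `F = 0`, `G = 1`,
all second derivatives but `X_ss = (0,0,u'')` vanish, and the soliton equation collapses to the
ODE `u'' = |1 - u'²| (u' v₂ - v₃)`. For `v = (v₁,0,1)` and `u'² > 1` this is `u'' = 1 - u'²`,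
which `u = log sinh(s+a) + b` solves: `u' = coth(s+a)`, `coth' = 1 - coth²` and `coth² > 1`.
-/

noncomputable section

/-- The Lorentzian (Minkowski) inner product on ℝ³:
`⟨a,b⟩ = a₁b₁ + a₂b₂ − a₃b₃`. -/
def mink (a b : Fin 3 → ℝ) : ℝ := a 0 * b 0 + a 1 * b 1 - a 2 * b 2

/-- Determinant of the 3×3 matrix with rows `a`, `b`, `c`. -/
def det3 (a b c : Fin 3 → ℝ) : ℝ :=
  a 0 * (b 1 * c 2 - b 2 * c 1) - a 1 * (b 0 * c 2 - b 2 * c 0)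
    + a 2 * (b 0 * c 1 - b 1 * c 0)

/-- Partial derivative `X_s` of a parametrized surface `X(s,t)`. -/
def pS (X : ℝ → ℝ → Fin 3 → ℝ) (s t : ℝ) : Fin 3 → ℝ := deriv (fun a => X a t) s

/-- Partial derivative `X_t`. -/
def pT (X : ℝ → ℝ → Fin 3 → ℝ) (s t : ℝ) : Fin 3 → ℝ := deriv (fun b => X s b) t

/-- Second partial derivative `X_ss`. -/
def pSS (X : ℝ → ℝ → Fin 3 → ℝ) (s t : ℝ) : Fin 3 → ℝ := deriv (fun a => pS X a t) s

/-- Mixed second partial derivative `X_st`. -/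
def pST (X : ℝ → ℝ → Fin 3 → ℝ) (s t : ℝ) : Fin 3 → ℝ := deriv (fun a => pT X a t) s

/-- Second partial derivative `X_tt`. -/
def pTT (X : ℝ → ℝ → Fin 3 → ℝ) (s t : ℝ) : Fin 3 → ℝ := deriv (fun b => pT X s b) t

/-- Coefficient `E = ⟨X_s, X_s⟩` of the first fundamental form. -/
def coefE (X : ℝ → ℝ → Fin 3 → ℝ) (s t : ℝ) : ℝ := mink (pS X s t) (pS X s t)

/-- Coefficient `F = ⟨X_s, X_t⟩` of the first fundamental form. -/
def coefF (X : ℝ → ℝ → Fin 3 → ℝ) (s t : ℝ) : ℝ := mink (pS X s t) (pT X s t)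

/-- Coefficient `G = ⟨X_t, X_t⟩` of the first fundamental form. -/
def coefG (X : ℝ → ℝ → Fin 3 → ℝ) (s t : ℝ) : ℝ := mink (pT X s t) (pT X s t)

/-- `EG − F²` at `(s,t)`. -/
def disc (X : ℝ → ℝ → Fin 3 → ℝ) (s t : ℝ) : ℝ :=
  coefE X s t * coefG X s t - coefF X s t ^ 2

/-- The translating soliton equation with respect to the velocity `v` at the point `(s,t)`:
`E·det(X_s,X_t,X_tt) − 2F·det(X_s,X_t,X_st) + G·det(X_s,X_t,X_ss)
  = −|EG − F²|·det(X_s,X_t,v)`. -/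
def SolitonEqAt (X : ℝ → ℝ → Fin 3 → ℝ) (v : Fin 3 → ℝ) (s t : ℝ) : Prop :=
  coefE X s t * det3 (pS X s t) (pT X s t) (pTT X s t)
    - 2 * coefF X s t * det3 (pS X s t) (pT X s t) (pST X s t)
    + coefG X s t * det3 (pS X s t) (pT X s t) (pSS X s t)
  = -|disc X s t| * det3 (pS X s t) (pT X s t) v

open Filter Topology

def cylinder (u : ℝ → ℝ) : ℝ → ℝ → Fin 3 → ℝ := fun s t => ![t, s, u s]

section Cylinder

variable (u : ℝ → ℝ) {s t : ℝ}

lemma pT_cylinder : pT (cylinder u) s t = ![1, 0, 0] := by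
  refine HasDerivAt.deriv (hasDerivAt_pi.2 fun i => ?_)
  fin_cases i
  · exact hasDerivAt_id t
  · exact hasDerivAt_const t s
  · exact hasDerivAt_const t (u s)

lemma pS_cylinder (hu : DifferentiableAt ℝ u s) :
    pS (cylinder u) s t = ![0, 1, deriv u s] := by
  refine HasDerivAt.deriv (hasDerivAt_pi.2 fun i => ?_)
  fin_cases i
  · exact hasDerivAt_const s t
  · exact hasDerivAt_id s
  · exact hu.hasDerivAt

lemma pST_cylinder : pST (cylinder u) s t = 0 := by
  simp only [pST, pT_cylinder, deriv_const]

lemma pTT_cylinder : pTT (cylinder u) s t = 0 := by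
  simp only [pTT, pT_cylinder, deriv_const]

lemma pSS_cylinder (hu : ∀ᶠ x in 𝓝 s, DifferentiableAt ℝ u x)
    (hu' : DifferentiableAt ℝ (deriv u) s) :
    pSS (cylinder u) s t = ![0, 0, deriv (deriv u) s] := by
  have hpS : (fun x => pS (cylinder u) x t) =ᶠ[𝓝 s] fun x => ![0, 1, deriv u x] := by
    filter_upwards [hu] with x hx using pS_cylinder u hx
  rw [pSS, hpS.deriv_eq]
  refine HasDerivAt.deriv (hasDerivAt_pi.2 fun i => ?_)
  fin_cases i
  · exact hasDerivAt_const s 0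
  · exact hasDerivAt_const s 1
  · exact hu'.hasDerivAt

theorem solitonEqAt_cylinder_iff (hu : ∀ᶠ x in 𝓝 s, DifferentiableAt ℝ u x)
    (hu' : DifferentiableAt ℝ (deriv u) s) (v : Fin 3 → ℝ) :
    SolitonEqAt (cylinder u) v s t ↔
      deriv (deriv u) s = |1 - deriv u s ^ 2| * (deriv u s * v 1 - v 2) := by
  simp only [SolitonEqAt, disc, coefE, coefF, coefG, pS_cylinder u hu.self_of_nhds,
    pT_cylinder, pST_cylinder, pTT_cylinder, pSS_cylinder u hu hu', mink, det3]
  simp only [Matrix.cons_val, Matrix.cons_val_zero, Matrix.cons_val_one, Pi.zero_apply]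
  ring_nf
  constructor <;> intro h <;> linarith

end Cylinder

def coth (x : ℝ) : ℝ := Real.cosh x / Real.sinh x

lemma one_sub_coth_sq_neg {x : ℝ} (hx : x ≠ 0) : 1 - coth x ^ 2 < 0 := by
  have hsinh : 0 < Real.sinh x ^ 2 := by positivity [Real.sinh_ne_zero.2 hx]
  rw [coth, div_pow, Real.cosh_sq, sub_neg, one_lt_div hsinh]
  linarith

lemma hasDerivAt_coth {x : ℝ} (hx : x ≠ 0) : HasDerivAt coth (1 - coth x ^ 2) x := by
  have hsinh := Real.sinh_ne_zero.2 hx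
  refine ((Real.hasDerivAt_cosh x).div (Real.hasDerivAt_sinh x) hsinh).congr_deriv ?_
  rw [coth]
  field_simp

def grimReaper (a b : ℝ) (s : ℝ) : ℝ := Real.log (Real.sinh (s + a)) + b

section GrimReaper

variable (a b : ℝ) {s : ℝ}

lemma hasDerivAt_grimReaper (hs : s + a ≠ 0) :
    HasDerivAt (grimReaper a b) (coth (s + a)) s := by
  have hsinh := (Real.hasDerivAt_sinh (s + a)).comp_add_const s a
  exact (hsinh.log (Real.sinh_ne_zero.2 hs)).add_const b

lemma deriv_grimReaper (hs : s + a ≠ 0) : deriv (grimReaper a b) s = coth (s + a) :=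
  (hasDerivAt_grimReaper a b hs).deriv

lemma one_sub_deriv_grimReaper_sq_neg (hs : s + a ≠ 0) :
    1 - deriv (grimReaper a b) s ^ 2 < 0 := by
  rw [deriv_grimReaper a b hs]
  exact one_sub_coth_sq_neg hs

lemma hasDerivAt_deriv_grimReaper (hs : s + a ≠ 0) :
    HasDerivAt (deriv (grimReaper a b)) (1 - deriv (grimReaper a b) s ^ 2) s := by
  have hderiv : deriv (grimReaper a b) =ᶠ[𝓝 s] fun x => coth (x + a) := by
    filter_upwards [(continuous_add_const a).continuousAt.eventually_ne hs] with x hx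
    exact deriv_grimReaper a b hx
  rw [hderiv.hasDerivAt_iff, deriv_grimReaper a b hs]
  exact (hasDerivAt_coth hs).comp_add_const s a

theorem solitonEqAt_cylinder_grimReaper (hs : s + a ≠ 0) (v₁ t : ℝ) :
    SolitonEqAt (cylinder (grimReaper a b)) ![v₁, 0, 1] s t := by
  have hdiff : ∀ᶠ x in 𝓝 s, DifferentiableAt ℝ (grimReaper a b) x := by
    filter_upwards [(continuous_add_const a).continuousAt.eventually_ne hs] with x hx
    exact (hasDerivAt_grimReaper a b hx).differentiableAt
  have hu'' := hasDerivAt_deriv_grimReaper a b hs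
  rw [solitonEqAt_cylinder_iff _ hdiff hu''.differentiableAt, hu''.deriv,
    abs_of_neg (one_sub_deriv_grimReaper_sq_neg a b hs)]
  simp

end GrimReaper

/-- The Lorentzian grim reaper `u(s) = log sinh(s+a) + b`, for `s > −a`,
satisfies `1 − u'² < 0` and `u'' = 1 − u'²`, and the cylindrical surface
`X(s,t) = (t, s, u(s))` is a translating soliton with respect to `v = (v₁,0,1)` at every
point `(s,t)` with `s > −a`. -/
theorem stmt6 (a b v₁ : ℝ) (u : ℝ → ℝ)
    (hu : u = fun s => Real.log (Real.sinh (s + a)) + b) :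
    (∀ s : ℝ, -a < s → 1 - (deriv u s) ^ 2 < 0) ∧
    (∀ s : ℝ, -a < s → deriv (deriv u) s = 1 - (deriv u s) ^ 2) ∧
    (∀ s t : ℝ, -a < s → SolitonEqAt (fun s t => ![t, s, u s]) ![v₁, 0, 1] s t) := by
  obtain rfl : u = grimReaper a b := hu
  have ha : ∀ s, -a < s → s + a ≠ 0 := fun s hs => by linarith
  exact ⟨fun s hs => one_sub_deriv_grimReaper_sq_neg a b (ha s hs),
    fun s hs => (hasDerivAt_deriv_grimReaper a b (ha s hs)).deriv,
    fun s t hs => solitonEqAt_cylinder_grimReaper a b (ha s hs) v₁ t⟩
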